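/- Let H be a complex vector space and x_1,...,x_n ∈ H with dim span{x_1,...,x_n} = r where 0 < r < n. Then there exist a complex r×(n−r) matrix B with every entry of modulus at most 2^{2n}, and a permutation σ of {1,...,n}, such that (x_{σ(1)},...,x_{σ(n−r)}) = (x_{σ(n−r+1)},...,x_{σ(n)}) · B. -/

import Mathlib

/-!
Fix a basis `e` of the span `V` of the `x k` and choose `r` of the vectors whose determinant with
respect to `e` has maximal modulus; it is nonzero, so they form a basis of `V`. By Cramer's rule
the `i`-th coordinate of any `x j` in this basis is the ratio of two such determinants, the
numerator being that of the family with its `i`-th vector replaced by `x j`, so by maximality it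
has modulus at most `1 ≤ 2 ^ (2n)`. Putting the chosen vectors last gives the permutation.
-/

open Module Submodule Set

section Field

variable {𝕜 V ι κ : Type*} [Field 𝕜] [AddCommGroup V] [Module 𝕜 V] [Fintype κ] [DecidableEq κ]

theorem Module.Basis.exists_isUnit_det_comp (e : Basis κ 𝕜 V) {y : ι → V}
    (hy : span 𝕜 (range y) = ⊤) : ∃ g : κ → ι, IsUnit (e.det (y ∘ g)) := by
  obtain ⟨κ', a, -, hspan, hli⟩ := exists_linearIndependent' 𝕜 y
  let b : Basis κ' 𝕜 V := .mk hli (hspan.trans hy).ge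
  refine ⟨a ∘ (b.indexEquiv e).symm, ?_⟩
  simpa [b, Basis.coe_reindex, Function.comp_assoc] using
    e.isUnit_det (b.reindex (b.indexEquiv e))

end Field

section NormedField

variable {𝕜 V ι κ : Type*} [NormedField 𝕜] [AddCommGroup V] [Module 𝕜 V]
  [Fintype κ] [DecidableEq κ]

theorem Module.Basis.exists_basis_comp_norm_repr_le_one [Finite ι] (e : Basis κ 𝕜 V)
    {y : ι → V} (hy : span 𝕜 (range y) = ⊤) :
    ∃ (g : κ → ι) (b : Basis κ 𝕜 V), ⇑b = y ∘ g ∧ ∀ j i, ‖b.repr (y j) i‖ ≤ 1 := by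
  obtain ⟨g₀, hg₀⟩ := e.exists_isUnit_det_comp hy
  have : Nonempty (κ → ι) := ⟨g₀⟩
  obtain ⟨g, hg⟩ := Finite.exists_max fun g : κ → ι => ‖e.det (y ∘ g)‖
  have hdet : 0 < ‖e.det (y ∘ g)‖ := (norm_pos_iff.2 hg₀.ne_zero).trans_le (hg g₀)
  obtain ⟨hli, hsp⟩ := e.is_basis_iff_det.2 (isUnit_iff_ne_zero.2 (norm_pos_iff.1 hdet))
  refine ⟨g, .mk hli hsp.ge, Basis.coe_mk _ _, fun j i => ?_⟩
  have hcramer : e.det (y ∘ g) * (Basis.mk hli hsp.ge).repr (y j) i =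
      e.det (y ∘ Function.update g i j) := by
    simpa [Function.comp_update] using
      LinearMap.congr_fun (e.det_smul_mk_coord_eq_det_update hli hsp.ge i) (y j)
  have := hg (Function.update g i j)
  rw [← hcramer, norm_mul] at this
  exact (mul_le_iff_le_one_right hdet).1 this

theorem exists_injective_sum_smul_norm_le_one [Finite ι] {M : Type*} [AddCommGroup M]
    [Module 𝕜 M] {r : ℕ} (x : ι → M) (hr : finrank 𝕜 (span 𝕜 (range x)) = r) :
    ∃ (g : Fin r → ι) (C : ι → Fin r → 𝕜), Function.Injective g ∧ (∀ j i, ‖C j i‖ ≤ 1) ∧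
      ∀ j, x j = ∑ i, C j i • x (g i) := by
  have : FiniteDimensional 𝕜 (span 𝕜 (range x)) := .span_of_finite 𝕜 (finite_range x)
  let y : ι → span 𝕜 (range x) := fun j => ⟨x j, subset_span (mem_range_self j)⟩
  have hy : span 𝕜 (range y) = ⊤ := by
    convert span_span_coe_preimage (R := 𝕜) (s := range x)
    ext ⟨v, hv⟩
    simp [y]
  obtain ⟨g, b, hb, hle⟩ := (finBasisOfFinrankEq 𝕜 _ hr).exists_basis_comp_norm_repr_le_one hy
  refine ⟨g, fun j => b.repr (y j), ?_, hle, fun j => ?_⟩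
  · exact .of_comp (hb ▸ b.injective)
  · have := congrArg Subtype.val (b.sum_repr (y j))
    simpa [hb, y] using this.symm

end NormedField

/-- if `dim span{x_1,...,x_n} = r` with `0 < r < n`, there exist a matrix `B` with
entries of modulus at most `2^(2n)` and a permutation `σ` such that
`(x_{σ(1)},...,x_{σ(n−r)}) = (x_{σ(n−r+1)},...,x_{σ(n)})·B`. -/
theorem stmt4 {H : Type*} [AddCommGroup H] [Module ℂ H]
    (n r : ℕ) (hrn : r < n) (x : Fin n → H)
    (hdim : Module.finrank ℂ ↥(Submodule.span ℂ (Set.range x)) = r) :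
    ∃ (B : Matrix (Fin r) (Fin (n - r)) ℂ) (σ : Equiv.Perm (Fin n)),
      (∀ i j, ‖B i j‖ ≤ 2 ^ (2 * n)) ∧
      (∀ j : Fin (n - r),
        x (σ ⟨(j : ℕ), by have := j.isLt; omega⟩) =
          ∑ i : Fin r, B i j • x (σ ⟨n - r + (i : ℕ), by have := i.isLt; omega⟩)) := by
  obtain ⟨g, C, hg, hC, hx⟩ := exists_injective_sum_smul_norm_le_one x hdim
  obtain ⟨σ, hσ⟩ := Equiv.Perm.exists_extending_pair
    (fun i : Fin r => (⟨n - r + i, by omega⟩ : Fin n)) g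
    (fun i i' h => Fin.ext (by simpa using h)) hg
  refine ⟨fun i j => C (σ ⟨j, by omega⟩) i, σ, fun i j => (hC _ i).trans (one_le_pow₀ one_le_two),
    fun j => ?_⟩
  simpa only [hσ] using hx _
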